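/- arXiv:2504.14518 — 4 statements merged into one kernel-verified Lean document; each statement's English description precedes it below -/
import Mathlib

section
/- There are no positive integers α and z such that 64 − 5^α = 3·z^2, and there are no positive integers α and z such that 5^α − 64 = 3·z^2. -/
/-!
Reduce modulo 5: since `α > 0`, the equations become `3 z² ≡ ±64 ≡ ±4 (mod 5)`, i.e.
`z² ≡ 3` or `z² ≡ 2 (mod 5)`, but the squares modulo 5 are only `0, 1, 4`.
-/

lemma ZMod.three_mul_sq_ne_four_and_ne_neg_four (w : ZMod 5) : 3 * w ^ 2 ≠ 4 ∧ 3 * w ^ 2 ≠ -4 := by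
  revert w
  decide

lemma Int.ne_three_mul_sq_of_cast_zmod_five {a : ℤ} (ha : (a : ZMod 5) = 4 ∨ (a : ZMod 5) = -4)
    (z : ℤ) : a ≠ 3 * z ^ 2 := by
  intro h
  have hmod : (a : ZMod 5) = 3 * (z : ZMod 5) ^ 2 := by
    exact_mod_cast congrArg (Int.cast : ℤ → ZMod 5) h
  obtain ⟨hne4, hne4'⟩ := ZMod.three_mul_sq_ne_four_and_ne_neg_four (z : ZMod 5)
  rcases ha with ha | ha <;> rw [ha] at hmod
  exacts [hne4 hmod.symm, hne4' hmod.symm]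

lemma Int.cast_five_pow_zmod_five {α : ℕ} (hα : 0 < α) : ((5 ^ α : ℤ) : ZMod 5) = 0 := by
  push_cast
  rw [show (5 : ZMod 5) = 0 from rfl, zero_pow hα.ne']

theorem stmt_6 :
    (¬ ∃ α z : ℕ, 0 < α ∧ 0 < z ∧ (64 : ℤ) - 5 ^ α = 3 * (z : ℤ) ^ 2) ∧
    (¬ ∃ α z : ℕ, 0 < α ∧ 0 < z ∧ (5 : ℤ) ^ α - 64 = 3 * (z : ℤ) ^ 2) := by
  constructor <;> rintro ⟨α, z, hα, -, h⟩ <;> refine Int.ne_three_mul_sq_of_cast_zmod_five ?_ z h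
  · left
    rw [Int.cast_sub, Int.cast_five_pow_zmod_five hα]
    decide
  · right
    rw [Int.cast_sub, Int.cast_five_pow_zmod_five hα]
    decide
end

section
/- There are no positive integers α and z such that 5^α + 64 = 3·z^2. -/
/-! Modulo 3 the equation forces `α` to be odd, since `5 ^ α ≡ 1` for even `α` gives
`5 ^ α + 64 ≡ 2`. For odd `α` we get `5 ^ α + 64 ≡ 5 [MOD 8]`, while `3 * z ^ 2` is
`0`, `3` or `4` modulo 8. -/

namespace Nat

theorem pow_modEq_one_of_even {a m n : ℕ} (ha : a ^ 2 ≡ 1 [MOD m]) (hn : Even n) :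
    a ^ n ≡ 1 [MOD m] := by
  obtain ⟨k, rfl⟩ := hn
  rw [← two_mul, pow_mul]
  simpa using ha.pow k

theorem pow_modEq_self_of_odd {a m n : ℕ} (ha : a ^ 2 ≡ 1 [MOD m]) (hn : Odd n) :
    a ^ n ≡ a [MOD m] := by
  obtain ⟨k, rfl⟩ := hn
  rw [pow_succ, pow_mul]
  simpa using (ha.pow k).mul_right a

theorem three_mul_sq_mod_eight_ne_five (z : ℕ) : 3 * z ^ 2 % 8 ≠ 5 := by
  have hZMod : ∀ x : ZMod 8, 3 * x ^ 2 ≠ 5 := by decide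
  intro hz
  apply hZMod z
  exact_mod_cast (ZMod.natCast_eq_natCast_iff' (3 * z ^ 2) 5 8).2 hz

end Nat

theorem stmt_7 : ¬ ∃ α z : ℕ, 0 < α ∧ 0 < z ∧ 5 ^ α + 64 = 3 * z ^ 2 := by
  rintro ⟨α, z, -, -, h⟩
  have hα : Odd α := by
    by_contra hev
    have h3 :=
      Nat.pow_modEq_one_of_even (by decide : 5 ^ 2 ≡ 1 [MOD 3]) (Nat.not_odd_iff_even.1 hev)
    unfold Nat.ModEq at h3
    omega
  have h8 := Nat.pow_modEq_self_of_odd (by decide : 5 ^ 2 ≡ 1 [MOD 8]) hα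
  unfold Nat.ModEq at h8
  exact Nat.three_mul_sq_mod_eight_ne_five z (by omega)
end

section
/- There is no positive integer α and integer z such that 2^α + 27 = 7·z^3, and there is no positive integer α and integer z such that 2^α − 27 = 7·z^3. -/
/-!
Reduce modulo `63 = 7 · 9`. Modulo 7, `2 ^ α ± 27 ≡ 0` forces `2 ^ α ≡ ±1`, i.e. `3 ∣ α`; then
`2 ^ α ≡ ±1 (mod 9)`, whereas `7 z ^ 3 ≡ 0, ±2 (mod 9)` because cubes are `0, ±1` modulo 9.
Since `2 ^ 6 = 1` in `ZMod 63`, this is a finite check over `α mod 6` and `z mod 63`.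
-/

lemma ZMod.two_pow_eq_two_pow_mod_six (n : ℕ) : (2 : ZMod 63) ^ n = 2 ^ (n % 6) := by
  conv_lhs => rw [← Nat.mod_add_div n 6, pow_add, pow_mul]
  rw [show (2 : ZMod 63) ^ 6 = 1 by decide, one_pow, mul_one]

lemma ZMod.two_pow_add_ne_seven_mul_cube (n : ℕ) (c w : ZMod 63) (hc : c = 27 ∨ c = -27) :
    2 ^ n + c ≠ 7 * w ^ 3 := by
  have key : ∀ m : Fin 6, ∀ w : ZMod 63, 2 ^ (m : ℕ) + c ≠ 7 * w ^ 3 := by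
    rcases hc with rfl | rfl <;> decide
  rw [two_pow_eq_two_pow_mod_six]
  exact key ⟨n % 6, Nat.mod_lt n (by norm_num)⟩ w

lemma Int.two_pow_add_ne_seven_mul_cube (n : ℕ) (c z : ℤ) (hc : c = 27 ∨ c = -27) :
    2 ^ n + c ≠ 7 * z ^ 3 := by
  intro h
  have h63 := congrArg (Int.cast : ℤ → ZMod 63) h
  push_cast at h63
  exact ZMod.two_pow_add_ne_seven_mul_cube n c z (by rcases hc with rfl | rfl <;> simp) h63

theorem stmt_8 :
    (¬ ∃ (α : ℕ) (z : ℤ), 0 < α ∧ (2 : ℤ) ^ α + 27 = 7 * z ^ 3) ∧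
    (¬ ∃ (α : ℕ) (z : ℤ), 0 < α ∧ (2 : ℤ) ^ α - 27 = 7 * z ^ 3) := by
  refine ⟨fun ⟨α, z, _, h⟩ => ?_, fun ⟨α, z, _, h⟩ => ?_⟩
  · exact Int.two_pow_add_ne_seven_mul_cube α 27 z (.inl rfl) h
  · exact Int.two_pow_add_ne_seven_mul_cube α (-27) z (.inr rfl) (by rwa [← sub_eq_add_neg])
end

section
/- There is no positive integer α and integer z such that 2^α + 27 = 13·z^3, and there is no positive integer α and integer z such that 2^α − 27 = 13·z^3. -/
/-!
Reduce modulo 13 and modulo 9. Modulo 13 the equation reads `2^α ≡ ∓1`, and since `2` has order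
12 modulo 13 this forces `6 ∣ α`. But then `2^α ≡ 1 (mod 9)`, while modulo 9 the equation reads
`2^α ≡ 4 z^3`, and `4 z^3 ∈ {0, 4, 5}` modulo 9 because cubes are `0, ±1`.
-/

theorem orderOf_two_zmod_thirteen : orderOf (2 : ZMod 13) = 12 := by
  rw [orderOf_eq_iff (by norm_num)]
  decide

theorem six_dvd_of_two_pow_sq_eq_one {α : ℕ} (h : ((2 : ZMod 13) ^ α) ^ 2 = 1) : 6 ∣ α := by
  rw [← pow_mul, ← orderOf_dvd_iff_pow_eq_one, orderOf_two_zmod_thirteen] at h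
  omega

theorem four_mul_cube_ne_one_zmod_nine : ∀ w : ZMod 9, 4 * w ^ 3 ≠ 1 := by
  decide

theorem two_pow_add_ne_thirteen_mul_cube {s : ℤ} (hs : s ^ 2 = 1) (α : ℕ) (z : ℤ) :
    2 ^ α + 27 * s ≠ 13 * z ^ 3 := by
  intro h
  have h13 := congrArg (Int.cast : ℤ → ZMod 13) h
  have h9 := congrArg (Int.cast : ℤ → ZMod 9) h
  push_cast at h13 h9
  reduce_mod_char at h13 h9
  have hs13 : (s : ZMod 13) ^ 2 = 1 := by exact_mod_cast congrArg (Int.cast : ℤ → ZMod 13) hs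
  obtain ⟨k, rfl⟩ : 6 ∣ α :=
    six_dvd_of_two_pow_sq_eq_one (by linear_combination (2 ^ α - (s : ZMod 13)) * h13 + hs13)
  rw [pow_mul, show (2 : ZMod 9) ^ 6 = 1 by decide, one_pow] at h9
  exact four_mul_cube_ne_one_zmod_nine z h9.symm

theorem stmt_9 :
    (¬ ∃ (α : ℕ) (z : ℤ), 0 < α ∧ (2 : ℤ) ^ α + 27 = 13 * z ^ 3) ∧
    (¬ ∃ (α : ℕ) (z : ℤ), 0 < α ∧ (2 : ℤ) ^ α - 27 = 13 * z ^ 3) := by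
  constructor
  · rintro ⟨α, z, -, h⟩
    exact two_pow_add_ne_thirteen_mul_cube (s := 1) (by norm_num) α z (by linarith)
  · rintro ⟨α, z, -, h⟩
    exact two_pow_add_ne_thirteen_mul_cube (s := -1) (by norm_num) α z (by linarith)
end
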